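/- arXiv:2103.13878 — 5 statements merged into one kernel-verified Lean document; each statement's English description precedes it below -/
import Mathlib

section
/- Let E = EuclideanSpace ℝ (Fin 3) and x ∈ E. Let n : E → E be differentiable at x with ‖n y‖ = 1 for all y in a neighborhood of x and with fderiv ℝ n x (n x) = 0. Let v : E → E be differentiable at x and suppose ⟪v y, n y⟫ = 0 for all y in a neighborhood of x. Then ⟪fderiv ℝ v x (n x), n x⟫ = 0; consequently the surface divergence of v at x equals its ordinary divergence: (trace of fderiv ℝ v x) - ⟪fderiv ℝ v x (n x), n x⟫ = trace of fderiv ℝ v x. -/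
open Filter Topology

theorem inner_fderiv_add_inner_fderiv_eq_zero_of_eventually_inner_eq_zero
    {E F : Type*} [NormedAddCommGroup E] [NormedSpace ℝ E]
    [NormedAddCommGroup F] [InnerProductSpace ℝ F] {v n : E → F} {x : E}
    (hv : DifferentiableAt ℝ v x) (hn : DifferentiableAt ℝ n x)
    (hperp : ∀ᶠ y in 𝓝 x, (inner ℝ (v y) (n y) : ℝ) = 0) (h : E) :
    inner ℝ (v x) (fderiv ℝ n x h) + inner ℝ (fderiv ℝ v x h) (n x) = 0 := by
  have hzero : fderiv ℝ (fun y => (inner ℝ (v y) (n y) : ℝ)) x = 0 := by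
    have hconst : (fun y => (inner ℝ (v y) (n y) : ℝ)) =ᶠ[𝓝 x] fun _ => 0 := hperp
    rw [hconst.fderiv_eq, fderiv_const_apply]
  rw [← fderiv_inner_apply ℝ hv hn h, hzero, zero_apply]

theorem surface_div_eq_div_general
    (x : EuclideanSpace ℝ (Fin 3))
    (n : EuclideanSpace ℝ (Fin 3) → EuclideanSpace ℝ (Fin 3))
    (hn_diff : DifferentiableAt ℝ n x)
    (hnn : fderiv ℝ n x (n x) = 0)
    (v : EuclideanSpace ℝ (Fin 3) → EuclideanSpace ℝ (Fin 3))
    (hv : DifferentiableAt ℝ v x)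
    (hperp : ∀ᶠ y in nhds x, (inner ℝ (v y) (n y) : ℝ) = 0) :
    (inner ℝ (fderiv ℝ v x (n x)) (n x) : ℝ) = 0 ∧
    LinearMap.trace ℝ (EuclideanSpace ℝ (Fin 3)) (fderiv ℝ v x).toLinearMap
        - (inner ℝ (fderiv ℝ v x (n x)) (n x) : ℝ)
      = LinearMap.trace ℝ (EuclideanSpace ℝ (Fin 3)) (fderiv ℝ v x).toLinearMap := by
  have hnormal : (inner ℝ (fderiv ℝ v x (n x)) (n x) : ℝ) = 0 := by
    simpa [hnn] using
      inner_fderiv_add_inner_fderiv_eq_zero_of_eventually_inner_eq_zero hv hn_diff hperp (n x)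
  exact ⟨hnormal, by rw [hnormal, sub_zero]⟩

/-- For a vector field `v` tangent to a surface and to all nearby displaced surfaces,
the surface divergence equals the ordinary divergence. -/
theorem surface_div_eq_div
    (x : EuclideanSpace ℝ (Fin 3))
    (n : EuclideanSpace ℝ (Fin 3) → EuclideanSpace ℝ (Fin 3))
    (hn_diff : DifferentiableAt ℝ n x)
    (hn_norm : ∀ᶠ y in nhds x, ‖n y‖ = 1)
    (hnn : fderiv ℝ n x (n x) = 0)
    (v : EuclideanSpace ℝ (Fin 3) → EuclideanSpace ℝ (Fin 3))
    (hv : DifferentiableAt ℝ v x)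
    (hperp : ∀ᶠ y in nhds x, (inner ℝ (v y) (n y) : ℝ) = 0) :
    (inner ℝ (fderiv ℝ v x (n x)) (n x) : ℝ) = 0 ∧
    LinearMap.trace ℝ (EuclideanSpace ℝ (Fin 3)) (fderiv ℝ v x).toLinearMap
        - (inner ℝ (fderiv ℝ v x (n x)) (n x) : ℝ)
      = LinearMap.trace ℝ (EuclideanSpace ℝ (Fin 3)) (fderiv ℝ v x).toLinearMap :=
  surface_div_eq_div_general x n hn_diff hnn v hv hperp
end

section
/- Let E = EuclideanSpace ℝ (Fin 3) and x ∈ E. Let u : E → ℝ be twice continuously differentiable on a neighborhood of x, and let n : E → E be differentiable at x with ‖n y‖ = 1 for all y in a neighborhood of x. Set ψ(y) := ⟪n y, ∇u(y)⟫ and define the surface Laplacian of u at x by Δ_Γu(x) := trace(fderiv ℝ (fun y => ∇u(y) - ψ(y) • n y) x) - ⟪fderiv ℝ (fun y => ∇u(y) - ψ(y) • n y) x (n x), n x⟫. Then Δ_Γu(x) = Δu(x) - ⟪(fderiv ℝ (fun y => ∇u y) x) (n x), n x⟫ - ψ(x) · trace(fderiv ℝ n x), where Δu(x) := trace(fderiv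 ℝ (fun y => ∇u y) x) is the ordinary Laplacian. -/
/-!
Write `P w = w - ⟪n, w⟫ n` for the tangential part of a vector field. By the product rule,
`D(P w) = Dw - ⟪n, w⟫ Dn - (n ⊗ ∇⟪n, w⟫)`. The rank-one term has trace `∂ₙ⟪n, w⟫` and contributes
the same amount to `nᵀ D(P w) n`, because `⟪n, n⟫ = 1`, so it cancels in the surface divergence;
the term `⟪n, w⟫ Dn` contributes `⟪n, w⟫ div n` to the trace and nothing to `nᵀ D(P w) n`,
because differentiating `‖n‖² = 1` gives `⟪(Dn) v, n⟫ = 0`. Apply this to `w = ∇u`.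
-/

open Filter Topology InnerProductSpace

theorem ContDiffAt.differentiableAt_gradient {F : Type*} [NormedAddCommGroup F]
    [InnerProductSpace ℝ F] [CompleteSpace F] {u : F → ℝ} {x : F} {m : WithTop ℕ∞}
    (hu : ContDiffAt ℝ m u x) (hm : 2 ≤ m) : DifferentiableAt ℝ (gradient u) x :=
  (toDual ℝ F).symm.differentiableAt.comp x
    ((hu.fderiv_right (m := 1) hm).differentiableAt one_ne_zero)

theorem inner_fderiv_apply_self_eq_zero_of_norm_eq_one {E F : Type*} [NormedAddCommGroup E]
    [NormedSpace ℝ E] [NormedAddCommGroup F] [InnerProductSpace ℝ F] {n : E → F} {x : E}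
    (hn : DifferentiableAt ℝ n x) (hn_norm : ∀ᶠ y in 𝓝 x, ‖n y‖ = 1) (v : E) :
    ⟪fderiv ℝ n x v, n x⟫_ℝ = 0 := by
  have h_const : (fun y => ⟪n y, n y⟫_ℝ) =ᶠ[𝓝 x] fun _ => 1 := by
    filter_upwards [hn_norm] with y hy
    rw [real_inner_self_eq_norm_sq, hy, one_pow]
  have h_deriv := fderiv_inner_apply (𝕜 := ℝ) hn hn v
  rw [h_const.fderiv_eq, fderiv_const_apply, zero_apply] at h_deriv
  linarith [real_inner_comm (n x) (fderiv ℝ n x v)]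

section SurfaceDivergence

variable {E : Type*} [NormedAddCommGroup E] [InnerProductSpace ℝ E] [FiniteDimensional ℝ E]

/-- The surface divergence `∇_Γ · w = div w - nᵀ (Dw) n` relative to the normal field `n`. -/
noncomputable def surfaceDiv (n w : E → E) (x : E) : ℝ :=
  LinearMap.trace ℝ E (fderiv ℝ w x).toLinearMap - ⟪fderiv ℝ w x (n x), n x⟫_ℝ

theorem surfaceDiv_sub_inner_smul {n w : E → E} {x : E} (hw : DifferentiableAt ℝ w x)
    (hn : DifferentiableAt ℝ n x) (hn_norm : ∀ᶠ y in 𝓝 x, ‖n y‖ = 1) :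
    surfaceDiv n (fun y => w y - ⟪n y, w y⟫_ℝ • n y) x
      = surfaceDiv n w x - ⟪n x, w x⟫_ℝ * LinearMap.trace ℝ E (fderiv ℝ n x).toLinearMap := by
  have hψ : DifferentiableAt ℝ (fun y => ⟪n y, w y⟫_ℝ) x := hn.inner ℝ hw
  have h_deriv : fderiv ℝ (fun y => w y - ⟪n y, w y⟫_ℝ • n y) x
      = fderiv ℝ w x - (⟪n x, w x⟫_ℝ • fderiv ℝ n x
        + (fderiv ℝ (fun y => ⟪n y, w y⟫_ℝ) x).smulRight (n x)) := by
    have hψn : DifferentiableAt ℝ (fun y => ⟪n y, w y⟫_ℝ • n y) x := hψ.smul hn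
    rw [fderiv_fun_sub hw hψn, fderiv_fun_smul hψ hn]
  have h_unit : ⟪n x, n x⟫_ℝ = 1 := by
    rw [real_inner_self_eq_norm_sq, hn_norm.self_of_nhds, one_pow]
  have h_trace_rank_one : LinearMap.trace ℝ E
      ((fderiv ℝ (fun y => ⟪n y, w y⟫_ℝ) x).smulRight (n x)).toLinearMap
      = fderiv ℝ (fun y => ⟪n y, w y⟫_ℝ) x (n x) :=
    LinearMap.trace_smulRight _ _
  have h_orth := inner_fderiv_apply_self_eq_zero_of_norm_eq_one hn hn_norm (n x)
  rw [surfaceDiv, surfaceDiv, h_deriv]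
  simp only [ContinuousLinearMap.toLinearMap_sub, ContinuousLinearMap.toLinearMap_add,
    ContinuousLinearMap.toLinearMap_smul, map_sub, map_add, map_smul, smul_eq_mul, sub_apply,
    add_apply, smul_apply, ContinuousLinearMap.smulRight_apply, inner_sub_left, inner_add_left, real_inner_smul_left, h_trace_rank_one, h_unit, h_orth]
  ring

end SurfaceDivergence

/-- Key identity in the proof of Theorem 2.1:
`Δ_Γu = Δū - nᵀ∇²ū n + 2H⟪n, ∇ū⟫` (with `∇·n = -2H`). -/
theorem surface_laplacian_identity
    (x : EuclideanSpace ℝ (Fin 3))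
    (u : EuclideanSpace ℝ (Fin 3) → ℝ)
    (hu : ContDiffAt ℝ 2 u x)
    (n : EuclideanSpace ℝ (Fin 3) → EuclideanSpace ℝ (Fin 3))
    (hn_diff : DifferentiableAt ℝ n x)
    (hn_norm : ∀ᶠ y in nhds x, ‖n y‖ = 1) :
    LinearMap.trace ℝ (EuclideanSpace ℝ (Fin 3))
        (fderiv ℝ (fun y => gradient u y - (inner ℝ (n y) (gradient u y) : ℝ) • n y) x).toLinearMap
      - (inner ℝ (fderiv ℝ (fun y => gradient u y - (inner ℝ (n y) (gradient u y) : ℝ) • n y) x (n x))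
          (n x) : ℝ)
    = LinearMap.trace ℝ (EuclideanSpace ℝ (Fin 3))
        (fderiv ℝ (fun y => gradient u y) x).toLinearMap
      - (inner ℝ (fderiv ℝ (fun y => gradient u y) x (n x)) (n x) : ℝ)
      - (inner ℝ (n x) (gradient u x) : ℝ)
          * LinearMap.trace ℝ (EuclideanSpace ℝ (Fin 3)) (fderiv ℝ n x).toLinearMap :=
  surfaceDiv_sub_inner_smul (hu.differentiableAt_gradient le_rfl) hn_diff hn_norm
end

section
/- Let E = EuclideanSpace ℝ (Fin 3) and x ∈ E. Let u : E → ℝ be twice continuously differentiable on a neighborhood of x, let n : E → E be differentiable at x with ‖n y‖ = 1 for all y in a neighborhood of x, and let g ∈ ℝ. Set ψ(y) := ⟪n y, ∇u(y)⟫ and Δ_Γu(x) := trace(fderiv ℝ (fun y => ∇u(y) - ψ(y) • n y) x) - ⟪fderiv ℝ (fun y => ∇u(y) - ψ(y) • n y) x (n x), n x⟫. Then |Δ_Γu(x) - g| ≤ max 1 |trace(fderiv ℝ n x)| * ( |Δu(x) - g| + |⟪n x, ∇u(x)⟫| + |⟪(fderiv ℝ (fun y => ∇u y) x)(n x), n x⟫|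 ), where Δu(x) := trace(fderiv ℝ (fun y => ∇u y) x). -/
/-!
Write `P = w - ⟪n, w⟫ n` for `w = ∇u`. Then `DP = Dw - ⟪n, w⟫ Dn - n ⊗ ∇⟪n, w⟫`; the rank-one
term adds the same quantity `∂ₙ⟪n, w⟫` to `tr DP` and to `⟪DP n, n⟫`, so it cancels in
`Δ_Γu`, and `⟪Dn h, n⟫ = 0` because `‖n‖ = 1`. Hence
`Δ_Γu - g = (Δu - g) - ⟪n, ∇u⟫ div n - ⟪∇²u n, n⟫`, and the triangle inequality concludes.
-/

open Filter Topology InnerProductSpace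

section TangentialProjection

variable {F : Type*} [NormedAddCommGroup F] [NormedSpace ℝ F]
  {E : Type*} [NormedAddCommGroup E] [InnerProductSpace ℝ E]

theorem ContDiffAt.differentiableAt_gradient_s9 [CompleteSpace E] {u : E → ℝ} {x : E}
    (hu : ContDiffAt ℝ 2 u x) : DifferentiableAt ℝ (gradient u) x :=
  (toDual ℝ E).symm.toContinuousLinearEquiv.differentiableAt.comp x
    ((hu.fderiv_right (m := 1) le_rfl).differentiableAt one_ne_zero)

theorem inner_fderiv_apply_eq_zero_of_eventually_norm_eq {n : F → E} {x : F} {c : ℝ}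
    (hn : DifferentiableAt ℝ n x) (hn_norm : ∀ᶠ y in 𝓝 x, ‖n y‖ = c) (h : F) :
    ⟪fderiv ℝ n x h, n x⟫_ℝ = 0 := by
  have hconst : HasFDerivAt (‖n ·‖ ^ 2) (0 : F →L[ℝ] ℝ) x :=
    (hasFDerivAt_const (c ^ 2) x).congr_of_eventuallyEq <| by
      filter_upwards [hn_norm] with y hy using by rw [hy]
  have h2 := congrArg (· h) (hn.hasFDerivAt.norm_sq.unique hconst)
  simp only [smul_apply, ContinuousLinearMap.comp_apply, innerSL_apply_apply,
    zero_apply, smul_eq_zero, two_ne_zero, false_or] at h2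
  rw [real_inner_comm, h2]

theorem fderiv_sub_inner_smul {w n : F → E} {x : F}
    (hw : DifferentiableAt ℝ w x) (hn : DifferentiableAt ℝ n x) :
    fderiv ℝ (fun y => w y - ⟪n y, w y⟫_ℝ • n y) x =
      fderiv ℝ w x - (⟪n x, w x⟫_ℝ • fderiv ℝ n x +
        (fderiv ℝ (fun y => ⟪n y, w y⟫_ℝ) x).smulRight (n x)) := by
  rw [fderiv_fun_sub (g := fun y => ⟪n y, w y⟫_ℝ • n y) hw ((hn.inner ℝ hw).smul hn),
    fderiv_fun_smul (hn.inner ℝ hw) hn]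

theorem trace_sub_inner_fderiv_sub_inner_smul [FiniteDimensional ℝ E] {w n : E → E} {x : E}
    (hw : DifferentiableAt ℝ w x) (hn : DifferentiableAt ℝ n x)
    (hn_norm : ∀ᶠ y in 𝓝 x, ‖n y‖ = 1) :
    LinearMap.trace ℝ E (fderiv ℝ (fun y => w y - ⟪n y, w y⟫_ℝ • n y) x).toLinearMap
        - ⟪fderiv ℝ (fun y => w y - ⟪n y, w y⟫_ℝ • n y) x (n x), n x⟫_ℝ =
      LinearMap.trace ℝ E (fderiv ℝ w x).toLinearMap
        - ⟪n x, w x⟫_ℝ * LinearMap.trace ℝ E (fderiv ℝ n x).toLinearMap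
        - ⟪fderiv ℝ w x (n x), n x⟫_ℝ := by
  have htrace :
      LinearMap.trace ℝ E (fderiv ℝ (fun y => w y - ⟪n y, w y⟫_ℝ • n y) x).toLinearMap =
      LinearMap.trace ℝ E (fderiv ℝ w x).toLinearMap
        - ⟪n x, w x⟫_ℝ * LinearMap.trace ℝ E (fderiv ℝ n x).toLinearMap
        - fderiv ℝ (fun y => ⟪n y, w y⟫_ℝ) x (n x) := by
    simp only [fderiv_sub_inner_smul hw hn, ContinuousLinearMap.toLinearMap_sub,
      ContinuousLinearMap.toLinearMap_add, ContinuousLinearMap.toLinearMap_smul,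
      ContinuousLinearMap.coe_smulRight, map_sub, map_add, map_smul, smul_eq_mul,
      LinearMap.trace_smulRight, ContinuousLinearMap.coe_coe]
    ring
  have hinner : ⟪fderiv ℝ (fun y => w y - ⟪n y, w y⟫_ℝ • n y) x (n x), n x⟫_ℝ =
      ⟪fderiv ℝ w x (n x), n x⟫_ℝ - fderiv ℝ (fun y => ⟪n y, w y⟫_ℝ) x (n x) := by
    simp [fderiv_sub_inner_smul hw hn, inner_sub_left, inner_add_left, real_inner_smul_left,
      inner_fderiv_apply_eq_zero_of_eventually_norm_eq hn hn_norm, hn_norm.self_of_nhds]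
  rw [htrace, hinner]
  ring

end TangentialProjection

theorem abs_sub_mul_sub_le_max_one_mul (a b c t : ℝ) :
    |a - c * t - b| ≤ max 1 |t| * (|a| + |c| + |b|) :=
  calc |a - c * t - b| ≤ |a| + |c| * |t| + |b| := by
        rw [← abs_mul]; exact (abs_sub _ _).trans (by gcongr; exact abs_sub _ _)
    _ ≤ max 1 |t| * |a| + |c| * max 1 |t| + max 1 |t| * |b| := by
        gcongr
        · exact le_mul_of_one_le_left (abs_nonneg a) (le_max_left _ _)
        · exact le_max_right _ _
        · exact le_mul_of_one_le_left (abs_nonneg b) (le_max_left _ _)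
    _ = max 1 |t| * (|a| + |c| + |b|) := by ring

/-- Pointwise form of estimate (3) of Theorem 2.1:
`|Δ_Γu - g| ≤ C(|Δū - g| + |⟪n, ∇ū⟫| + |nᵀ∇²ū n|)` with `C = max 1 |∇·n| = max(1, 2|H|)`. -/
theorem surface_laplacian_estimate_pointwise
    (x : EuclideanSpace ℝ (Fin 3))
    (u : EuclideanSpace ℝ (Fin 3) → ℝ)
    (hu : ContDiffAt ℝ 2 u x)
    (n : EuclideanSpace ℝ (Fin 3) → EuclideanSpace ℝ (Fin 3))
    (hn_diff : DifferentiableAt ℝ n x)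
    (hn_norm : ∀ᶠ y in nhds x, ‖n y‖ = 1)
    (g : ℝ) :
    |LinearMap.trace ℝ (EuclideanSpace ℝ (Fin 3))
        (fderiv ℝ (fun y => gradient u y - (inner ℝ (n y) (gradient u y) : ℝ) • n y) x).toLinearMap
      - (inner ℝ (fderiv ℝ (fun y => gradient u y - (inner ℝ (n y) (gradient u y) : ℝ) • n y) x (n x))
          (n x) : ℝ)
      - g| ≤
    max 1 |LinearMap.trace ℝ (EuclideanSpace ℝ (Fin 3)) (fderiv ℝ n x).toLinearMap| *
      (|LinearMap.trace ℝ (EuclideanSpace ℝ (Fin 3))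
          (fderiv ℝ (fun y => gradient u y) x).toLinearMap - g|
        + |(inner ℝ (n x) (gradient u x) : ℝ)|
        + |(inner ℝ (fderiv ℝ (fun y => gradient u y) x (n x)) (n x) : ℝ)|) := by
  rw [trace_sub_inner_fderiv_sub_inner_smul hu.differentiableAt_gradient_s9 hn_diff hn_norm]
  convert abs_sub_mul_sub_le_max_one_mul _ _ _ _ using 2
  ring
end

section
/- Let E = EuclideanSpace ℝ (Fin 3), let μ be a measure on E, let u : E → ℝ be twice continuously differentiable (ContDiff ℝ 2), let n : E → E be differentiable with ‖n y‖ = 1 for every y ∈ E, let g : E → ℝ, and let H ≥ 0 be a real number with |trace(fderiv ℝ n x)| ≤ 2H for μ-a.e. x. Set ψ(y) := ⟪n y, ∇u(y)⟫, Δu(x) := trace(fderiv ℝ (fun y => ∇u y) x), Q(x) := ⟪(fderiv ℝ (fun y => ∇u y) x)(n x), n x⟫, and Δ_Γu(x) := trace(fderiv ℝ (fun y => ∇u(y) - ψ(y) • n y) x) - ⟪fderiv ℝ (fun y => ∇u(y) - ψ(y) • n y) x (n x), n x⟫. Assume the functions x ↦ Δ_Γu(x) - g x, x ↦ Δu(x)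 - g x, ψ, and Q are a.e. strongly measurable with respect to μ. Then eLpNorm (fun x => Δ_Γu(x) - g x) 2 μ ≤ ENNReal.ofReal (max 1 (2*H)) * ( eLpNorm (fun x => Δu(x) - g x) 2 μ + eLpNorm ψ 2 μ + eLpNorm Q 2 μ ). -/
/-! Differentiating `⟪n, n⟫ = 1` shows that `fderiv ℝ n x v ⊥ n x`. Hence the product rule applied
to the tangential part `∇u - ⟪n, ∇u⟫ • n` gives, pointwise,
`Δ_Γu = Δu - ⟪n, ∇u⟫ div n - ⟪∇²u n, n⟫`,
and the estimate follows from Minkowski's inequality together with `|div n| ≤ 2H`. -/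

open MeasureTheory

open scoped ENNReal

section Calculus

variable {E : Type*} [NormedAddCommGroup E] [InnerProductSpace ℝ E]

theorem inner_fderiv_apply_self_eq_zero {n : E → E} {x : E} (hn : DifferentiableAt ℝ n x)
    (hn_norm : ∀ y, ‖n y‖ = 1) (v : E) : inner ℝ (fderiv ℝ n x v) (n x) = 0 := by
  have hconst : (fun y => inner ℝ (n y) (n y)) = fun _ => (1 : ℝ) := by
    funext y
    rw [real_inner_self_eq_norm_sq, hn_norm, one_pow]
  have h := fderiv_inner_apply (𝕜 := ℝ) hn hn v
  rw [hconst, fderiv_const_apply, zero_apply] at h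
  linarith [real_inner_comm (n x) (fderiv ℝ n x v)]

theorem ContDiff.gradient [CompleteSpace E] {u : E → ℝ} {k m : WithTop ℕ∞}
    (hu : ContDiff ℝ k u) (hmk : m + 1 ≤ k) : ContDiff ℝ m (gradient u) :=
  (InnerProductSpace.toDual ℝ E).symm.contDiff.comp (hu.fderiv_right hmk)

variable [FiniteDimensional ℝ E]

theorem trace_fderiv_tangentialPart_sub_inner {G n : E → E} {x : E}
    (hG : DifferentiableAt ℝ G x) (hn : DifferentiableAt ℝ n x) (hn_norm : ∀ y, ‖n y‖ = 1) :
    LinearMap.trace ℝ E (fderiv ℝ (fun y => G y - inner ℝ (n y) (G y) • n y) x).toLinearMap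
        - inner ℝ (fderiv ℝ (fun y => G y - inner ℝ (n y) (G y) • n y) x (n x)) (n x)
      = LinearMap.trace ℝ E (fderiv ℝ G x).toLinearMap
        - inner ℝ (n x) (G x) * LinearMap.trace ℝ E (fderiv ℝ n x).toLinearMap
        - inner ℝ (fderiv ℝ G x (n x)) (n x) := by
  have hψ : DifferentiableAt ℝ (fun y => inner ℝ (n y) (G y)) x := hn.inner ℝ hG
  have hD : fderiv ℝ (fun y => G y - inner ℝ (n y) (G y) • n y) x
      = fderiv ℝ G x - (inner ℝ (n x) (G x) • fderiv ℝ n x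
        + (fderiv ℝ (fun y => inner ℝ (n y) (G y)) x).smulRight (n x)) := by
    have hψn : DifferentiableAt ℝ (fun y => inner ℝ (n y) (G y) • n y) x := hψ.smul hn
    rw [fderiv_fun_sub hG hψn, fderiv_fun_smul hψ hn]
  have hnn : inner ℝ (n x) (n x) = (1 : ℝ) := by
    rw [real_inner_self_eq_norm_sq, hn_norm, one_pow]
  rw [hD]
  simp only [ContinuousLinearMap.toLinearMap_sub, ContinuousLinearMap.toLinearMap_add,
    ContinuousLinearMap.toLinearMap_smul, ContinuousLinearMap.coe_smulRight, map_sub, map_add,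
    map_smul, LinearMap.trace_smulRight, ContinuousLinearMap.coe_coe, sub_apply, add_apply,
    smul_apply, ContinuousLinearMap.smulRight_apply, inner_sub_left, inner_add_left,
    real_inner_smul_left, inner_fderiv_apply_self_eq_zero hn hn_norm, hnn, smul_eq_mul]
  ring

end Calculus

theorem measurable_trace_fderiv {E : Type*} [NormedAddCommGroup E] [NormedSpace ℝ E]
    [FiniteDimensional ℝ E] [MeasurableSpace E] [BorelSpace E] (f : E → E) :
    Measurable fun x => LinearMap.trace ℝ E (fderiv ℝ f x).toLinearMap :=
  (LinearMap.trace ℝ E ∘ₗ ContinuousLinearMap.coeLM ℝ).continuous_of_finiteDimensional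
    |>.measurable.comp (measurable_fderiv ℝ f)

theorem eLpNorm_sub_mul_sub_le {α : Type*} [MeasurableSpace α] {μ : Measure α} {p : ℝ≥0∞}
    {f ψ t Q : α → ℝ} {K : ℝ} (hf : AEStronglyMeasurable f μ) (hψ : AEStronglyMeasurable ψ μ)
    (ht : AEStronglyMeasurable t μ) (hQ : AEStronglyMeasurable Q μ) (htK : ∀ᵐ x ∂μ, |t x| ≤ K)
    (hp : 1 ≤ p) :
    eLpNorm (fun x => f x - ψ x * t x - Q x) p μ
      ≤ ENNReal.ofReal (max 1 K) * (eLpNorm f p μ + eLpNorm ψ p μ + eLpNorm Q p μ) := by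
  have hψt : eLpNorm (ψ * t) p μ ≤ ENNReal.ofReal K * eLpNorm ψ p μ := by
    refine eLpNorm_le_mul_eLpNorm_of_ae_le_mul (htK.mono fun x hx => ?_) p
    rw [Pi.mul_apply, norm_mul, mul_comm, Real.norm_eq_abs, Real.norm_eq_abs]
    exact mul_le_mul_of_nonneg_right hx (abs_nonneg _)
  have h1 : 1 ≤ ENNReal.ofReal (max 1 K) := ENNReal.one_le_ofReal.mpr (le_max_left 1 K)
  have hK : ENNReal.ofReal K ≤ ENNReal.ofReal (max 1 K) :=
    ENNReal.ofReal_le_ofReal (le_max_right 1 K)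
  calc eLpNorm (f - ψ * t - Q) p μ
      ≤ eLpNorm f p μ + eLpNorm (ψ * t) p μ + eLpNorm Q p μ :=
        (eLpNorm_sub_le (hf.sub (hψ.mul ht)) hQ hp).trans
          (add_le_add_left (eLpNorm_sub_le hf (hψ.mul ht) hp) _)
    _ ≤ 1 * eLpNorm f p μ + ENNReal.ofReal K * eLpNorm ψ p μ + 1 * eLpNorm Q p μ := by
        rw [one_mul, one_mul]; gcongr
    _ ≤ ENNReal.ofReal (max 1 K) * (eLpNorm f p μ + eLpNorm ψ p μ + eLpNorm Q p μ) := by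
        rw [mul_add, mul_add]; gcongr

theorem surface_laplacian_estimate_L2_general
    (μ : Measure (EuclideanSpace ℝ (Fin 3)))
    (u : EuclideanSpace ℝ (Fin 3) → ℝ)
    (hu : ContDiff ℝ 2 u)
    (n : EuclideanSpace ℝ (Fin 3) → EuclideanSpace ℝ (Fin 3))
    (hn_diff : Differentiable ℝ n)
    (hn_norm : ∀ y, ‖n y‖ = 1)
    (g : EuclideanSpace ℝ (Fin 3) → ℝ)
    (H : ℝ)
    (hHbound : ∀ᵐ x ∂μ,
      |LinearMap.trace ℝ (EuclideanSpace ℝ (Fin 3)) (fderiv ℝ n x).toLinearMap| ≤ 2 * H)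
    (h2 : AEStronglyMeasurable (fun x =>
      LinearMap.trace ℝ (EuclideanSpace ℝ (Fin 3))
        (fderiv ℝ (fun y => gradient u y) x).toLinearMap - g x) μ) :
    eLpNorm (fun x =>
      LinearMap.trace ℝ (EuclideanSpace ℝ (Fin 3))
        (fderiv ℝ (fun y => gradient u y - (inner ℝ (n y) (gradient u y) : ℝ) • n y) x).toLinearMap
      - (inner ℝ (fderiv ℝ (fun y => gradient u y - (inner ℝ (n y) (gradient u y) : ℝ) • n y) x (n x))
          (n x) : ℝ)
      - g x) 2 μ ≤
    ENNReal.ofReal (max 1 (2 * H)) *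
      (eLpNorm (fun x =>
        LinearMap.trace ℝ (EuclideanSpace ℝ (Fin 3))
          (fderiv ℝ (fun y => gradient u y) x).toLinearMap - g x) 2 μ
      + eLpNorm (fun x => (inner ℝ (n x) (gradient u x) : ℝ)) 2 μ
      + eLpNorm (fun x => (inner ℝ (fderiv ℝ (fun y => gradient u y) x (n x)) (n x) : ℝ)) 2 μ) := by
  have hG : ContDiff ℝ 1 (gradient u) := hu.gradient (by norm_num)
  have hψ : Continuous fun x => inner ℝ (n x) (gradient u x) :=
    hn_diff.continuous.inner hG.continuous
  have hQ : Continuous fun x => inner ℝ (fderiv ℝ (gradient u) x (n x)) (n x) :=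
    ((hG.continuous_fderiv one_ne_zero).clm_apply hn_diff.continuous).inner hn_diff.continuous
  convert eLpNorm_sub_mul_sub_le h2 hψ.aestronglyMeasurable
    (measurable_trace_fderiv n).aestronglyMeasurable hQ.aestronglyMeasurable hHbound one_le_two
    using 3 with x
  rw [trace_fderiv_tangentialPart_sub_inner (hG.differentiable one_ne_zero x) (hn_diff x) hn_norm]
  ring

/-- Estimate (3) of Theorem 2.1 in L² form:
`‖Δ_Γu - g‖ ≤ C(‖Δū - ḡ‖ + ‖⟪n, ∇ū⟫‖ + ‖nᵀ∇²ū n‖)` with `C = max(1, 2|H|)`. -/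
theorem surface_laplacian_estimate_L2
    (μ : Measure (EuclideanSpace ℝ (Fin 3)))
    (u : EuclideanSpace ℝ (Fin 3) → ℝ)
    (hu : ContDiff ℝ 2 u)
    (n : EuclideanSpace ℝ (Fin 3) → EuclideanSpace ℝ (Fin 3))
    (hn_diff : Differentiable ℝ n)
    (hn_norm : ∀ y, ‖n y‖ = 1)
    (g : EuclideanSpace ℝ (Fin 3) → ℝ)
    (H : ℝ) (hH : 0 ≤ H)
    (hHbound : ∀ᵐ x ∂μ,
      |LinearMap.trace ℝ (EuclideanSpace ℝ (Fin 3)) (fderiv ℝ n x).toLinearMap| ≤ 2 * H)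
    (h1 : AEStronglyMeasurable (fun x =>
      LinearMap.trace ℝ (EuclideanSpace ℝ (Fin 3))
        (fderiv ℝ (fun y => gradient u y - (inner ℝ (n y) (gradient u y) : ℝ) • n y) x).toLinearMap
      - (inner ℝ (fderiv ℝ (fun y => gradient u y - (inner ℝ (n y) (gradient u y) : ℝ) • n y) x (n x))
          (n x) : ℝ)
      - g x) μ)
    (h2 : AEStronglyMeasurable (fun x =>
      LinearMap.trace ℝ (EuclideanSpace ℝ (Fin 3))
        (fderiv ℝ (fun y => gradient u y) x).toLinearMap - g x) μ)
    (h3 : AEStronglyMeasurable (fun x => (inner ℝ (n x) (gradient u x) : ℝ)) μ)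
    (h4 : AEStronglyMeasurable
      (fun x => (inner ℝ (fderiv ℝ (fun y => gradient u y) x (n x)) (n x) : ℝ)) μ) :
    eLpNorm (fun x =>
      LinearMap.trace ℝ (EuclideanSpace ℝ (Fin 3))
        (fderiv ℝ (fun y => gradient u y - (inner ℝ (n y) (gradient u y) : ℝ) • n y) x).toLinearMap
      - (inner ℝ (fderiv ℝ (fun y => gradient u y - (inner ℝ (n y) (gradient u y) : ℝ) • n y) x (n x))
          (n x) : ℝ)
      - g x) 2 μ ≤
    ENNReal.ofReal (max 1 (2 * H)) *
      (eLpNorm (fun x =>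
        LinearMap.trace ℝ (EuclideanSpace ℝ (Fin 3))
          (fderiv ℝ (fun y => gradient u y) x).toLinearMap - g x) 2 μ
      + eLpNorm (fun x => (inner ℝ (n x) (gradient u x) : ℝ)) 2 μ
      + eLpNorm (fun x => (inner ℝ (fderiv ℝ (fun y => gradient u y) x (n x)) (n x) : ℝ)) 2 μ) :=
  surface_laplacian_estimate_L2_general μ u hu n hn_diff hn_norm g H hHbound h2
end

section
/- Let E = EuclideanSpace ℝ (Fin 3) and x ∈ E. Let φ : E → ℝ be twice continuously differentiable on a neighborhood of x with ∇φ(x) ≠ 0, and set n(y) := ‖∇φ(y)‖⁻¹ • ∇φ(y). Let v : E → E be differentiable at x and suppose ⟪v y, ∇φ(y)⟫ = 0 for all y in a neighborhood of x. Then trace(fderiv ℝ v x) - ⟪fderiv ℝ v x (n x), n x⟫ = ‖∇φ(x)‖⁻¹ * trace( fderiv ℝ (fun y => ‖∇φ(y)‖ • v y) x ). -/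
/-!
Differentiating `⟪v, ∇φ⟫ = 0` in the direction `∇φ` gives `⟪Dv ∇φ, ∇φ⟫ = -⟪v, H ∇φ⟫`, where
`H = D∇φ` is the Hessian. By the product rule and the symmetry of `H`,
`∇·(|∇φ| v) = |∇φ| ∇·v + ⟪H ∇φ, v⟫ / |∇φ|`, and the two formulas combine to the identity.
-/

open InnerProductSpace
open scoped RealInnerProductSpace

section

variable {𝕜 F : Type*} [NontriviallyNormedField 𝕜] [NormedAddCommGroup F] [NormedSpace 𝕜 F]
  [FiniteDimensional 𝕜 F]

theorem trace_fderiv_smul {f : F → 𝕜} {v : F → F} {x : F} (hf : DifferentiableAt 𝕜 f x)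
    (hv : DifferentiableAt 𝕜 v x) :
    LinearMap.trace 𝕜 F (fderiv 𝕜 (fun y => f y • v y) x).toLinearMap
      = f x * LinearMap.trace 𝕜 F (fderiv 𝕜 v x).toLinearMap + fderiv 𝕜 f x (v x) := by
  rw [fderiv_fun_smul hf hv, ContinuousLinearMap.toLinearMap_add, map_add,
    ContinuousLinearMap.toLinearMap_smul, map_smul, smul_eq_mul]
  congr 1
  exact LinearMap.trace_smulRight _ _

end

section

variable {E F : Type*} [NormedAddCommGroup E] [InnerProductSpace ℝ E]
  [NormedAddCommGroup F] [NormedSpace ℝ F]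

theorem HasFDerivAt.norm {f : F → E} {f' : F →L[ℝ] E} {x : F} (hf : HasFDerivAt f f' x)
    (h0 : f x ≠ 0) :
    HasFDerivAt (fun y => ‖f y‖) (‖f x‖⁻¹ • (innerSL ℝ (f x)).comp f') x := by
  have hsqrt := hf.norm_sq.sqrt (pow_ne_zero 2 (norm_ne_zero_iff.2 h0))
  simp only [Real.sqrt_sq (norm_nonneg _)] at hsqrt
  convert hsqrt using 1
  rw [two_smul, ← two_smul ℝ, smul_smul]
  congr 1
  field_simp

theorem HasFDerivAt.inner_add_inner_eq_zero {v g : F → E} {T G : F →L[ℝ] E} {x : F}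
    (hv : HasFDerivAt v T x) (hg : HasFDerivAt g G x)
    (hperp : ∀ᶠ y in nhds x, ⟪v y, g y⟫_ℝ = 0) (u : F) :
    ⟪v x, G u⟫_ℝ + ⟪T u, g x⟫_ℝ = 0 := by
  have hzero : HasFDerivAt (fun y => ⟪v y, g y⟫_ℝ) (0 : F →L[ℝ] ℝ) x :=
    (hasFDerivAt_const 0 x).congr_of_eventuallyEq hperp
  simpa [fderivInnerCLM_apply] using
    congrArg (· u) ((hv.inner ℝ hg).unique hzero)

end

section

variable {E : Type*} [NormedAddCommGroup E] [InnerProductSpace ℝ E] [CompleteSpace E]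

theorem ContDiffAt.exists_hasFDerivAt_gradient {φ : E → ℝ} {x : E} (hφ : ContDiffAt ℝ 2 φ x) :
    ∃ G : E →L[ℝ] E, HasFDerivAt (gradient φ) G x ∧ IsSelfAdjoint G := by
  let J : StrongDual ℝ E →L[ℝ] E := (toDual ℝ E).symm.toContinuousLinearEquiv.toContinuousLinearMap
  have hH : HasFDerivAt (fderiv ℝ φ) (fderiv ℝ (fderiv ℝ φ) x) x :=
    ((hφ.fderiv_right (m := 1) le_rfl).differentiableAt one_ne_zero).hasFDerivAt
  refine ⟨J ∘L fderiv ℝ (fderiv ℝ φ) x, J.hasFDerivAt.comp x hH, ?_⟩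
  rw [ContinuousLinearMap.isSelfAdjoint_iff_isSymmetric]
  intro u w
  change ⟪(toDual ℝ E).symm (fderiv ℝ (fderiv ℝ φ) x u), w⟫_ℝ
    = ⟪u, (toDual ℝ E).symm (fderiv ℝ (fderiv ℝ φ) x w)⟫_ℝ
  rw [toDual_symm_apply, real_inner_comm, toDual_symm_apply]
  exact hφ.isSymmSndFDerivAt (by simp [minSmoothness_of_isRCLikeNormedField]) u w

end

/-- Remark after Theorem 2.1: for a level-set surface `Γ = {φ = 0}` with unit normal
`n = ∇φ/|∇φ|`, if `v·n = 0` near `x` then `∇_Γ·v = (1/|∇φ|) ∇·(|∇φ| v)`. -/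
theorem surface_divergence_level_set
    (x : EuclideanSpace ℝ (Fin 3))
    (φ : EuclideanSpace ℝ (Fin 3) → ℝ)
    (hφ : ContDiffAt ℝ 2 φ x)
    (hφx : gradient φ x ≠ 0)
    (v : EuclideanSpace ℝ (Fin 3) → EuclideanSpace ℝ (Fin 3))
    (hv : DifferentiableAt ℝ v x)
    (hperp : ∀ᶠ y in nhds x, (inner ℝ (v y) (gradient φ y) : ℝ) = 0) :
    LinearMap.trace ℝ (EuclideanSpace ℝ (Fin 3)) (fderiv ℝ v x).toLinearMap
      - (inner ℝ (fderiv ℝ v x (‖gradient φ x‖⁻¹ • gradient φ x))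
          (‖gradient φ x‖⁻¹ • gradient φ x) : ℝ)
    = ‖gradient φ x‖⁻¹ *
        LinearMap.trace ℝ (EuclideanSpace ℝ (Fin 3))
          (fderiv ℝ (fun y => ‖gradient φ y‖ • v y) x).toLinearMap := by
  obtain ⟨G, hG, hGsymm⟩ := hφ.exists_hasFDerivAt_gradient
  have hnorm := hG.norm hφx
  have hperp_deriv := hv.hasFDerivAt.inner_add_inner_eq_zero hG hperp (gradient φ x)
  have hsymm : ⟪gradient φ x, G (v x)⟫_ℝ = ⟪v x, G (gradient φ x)⟫_ℝ := by
    rw [real_inner_comm]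
    exact hGsymm.isSymmetric _ _
  have ha : ‖gradient φ x‖ ≠ 0 := norm_ne_zero_iff.2 hφx
  rw [trace_fderiv_smul hnorm.differentiableAt hv, hnorm.fderiv]
  simp only [smul_apply, ContinuousLinearMap.comp_apply, innerSL_apply_apply,
    map_smul, real_inner_smul_left, real_inner_smul_right, smul_eq_mul, hsymm]
  field_simp
  linarith
end
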